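/- arXiv:1105.1361 — 3 statements merged into one kernel-verified Lean document; each statement's English description precedes it below -/
import Mathlib

section
/- With t(x,y) the first time the no-observation recursion started at x exceeds y, for fixed x < y one has t(x,y)·|log(1−ρ)| → log(1+e^y) − log(1+e^x) as ρ → 0; equivalently t(x,y) = ((log(1+e^y)−log(1+e^x))/|log(1−ρ)|)(1+o(1)) as ρ → 0. -/
/-!
Writing `D = |log (1 - ρ)|`, one step of the recursion multiplies `1 + e^Z` by exactly
`1 / (1 - ρ)`, so `log (1 + e^{Z_k}) = log (1 + e^x) + k D`. Since `a ↦ log (1 + e^a)` is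
strictly increasing, the first passage time above `y` satisfies `L < t D ≤ L + D` with
`L = log (1 + e^y) - log (1 + e^x)`, and `D → 0` as `ρ → 0`.
-/

open Real Filter Topology

namespace NoObservation

lemma strictMono_log_one_add_exp : StrictMono fun a : ℝ => log (1 + exp a) :=
  fun _ _ hab => log_lt_log (by positivity) (by simpa using exp_lt_exp.mpr hab)

variable {ρ : ℝ}

lemma one_add_exp_step (hρ : ρ ∈ Set.Ioo (0 : ℝ) 1) (a : ℝ) :
    1 + exp (a + |log (1 - ρ)| + log (1 + ρ * exp (-a))) = (1 + exp a) / (1 - ρ) := by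
  obtain ⟨hρ0, hρ1⟩ := hρ
  have h1ρ : 0 < 1 - ρ := by linarith
  have hpos : 0 < 1 + ρ * exp (-a) := by positivity
  rw [abs_of_neg (log_neg h1ρ (by linarith)), exp_add, exp_add, exp_neg (log _),
    exp_log h1ρ, exp_log hpos, exp_neg]
  field_simp
  ring

variable {z : ℕ → ℝ}

lemma log_one_add_exp_eq
    (hrec : ∀ k, z (k + 1) = z k + |log (1 - ρ)| + log (1 + ρ * exp (-(z k))))
    (hρ : ρ ∈ Set.Ioo (0 : ℝ) 1) (k : ℕ) :
    log (1 + exp (z k)) = log (1 + exp (z 0)) + k * |log (1 - ρ)| := by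
  induction k with
  | zero => simp
  | succ k ih =>
    have h1ρ : 0 < 1 - ρ := by linarith [hρ.2]
    rw [hrec, one_add_exp_step hρ, log_div (by positivity) h1ρ.ne', ih,
      abs_of_neg (log_neg h1ρ (by linarith [hρ.1]))]
    push_cast
    ring

lemma sub_lt_mul_of_lt
    (hrec : ∀ k, z (k + 1) = z k + |log (1 - ρ)| + log (1 + ρ * exp (-(z k))))
    (hρ : ρ ∈ Set.Ioo (0 : ℝ) 1) {y : ℝ} {n : ℕ} (hn : y < z n) :
    log (1 + exp y) - log (1 + exp (z 0)) < n * |log (1 - ρ)| := by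
  have := strictMono_log_one_add_exp hn
  linarith [log_one_add_exp_eq hrec hρ n]

lemma mul_le_sub_of_le
    (hrec : ∀ k, z (k + 1) = z k + |log (1 - ρ)| + log (1 + ρ * exp (-(z k))))
    (hρ : ρ ∈ Set.Ioo (0 : ℝ) 1) {y : ℝ} {m : ℕ} (hm : z m ≤ y) :
    m * |log (1 - ρ)| ≤ log (1 + exp y) - log (1 + exp (z 0)) := by
  have := strictMono_log_one_add_exp.monotone hm
  linarith [log_one_add_exp_eq hrec hρ m]

end NoObservation

open NoObservation

lemma tendsto_abs_log_one_sub_zero :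
    Tendsto (fun ρ : ℝ => |log (1 - ρ)|) (𝓝 0) (𝓝 0) := by
  have hc : ContinuousAt (fun ρ : ℝ => |log (1 - ρ)|) 0 :=
    ((continuousAt_log (by norm_num)).comp (by fun_prop)).abs
  simpa using hc.tendsto

/-- Asymptotics of the hitting time as ρ → 0:
t(x,y)·|log(1−ρ)| → log(1+e^y) − log(1+e^x). -/
theorem stmt7 (x y : ℝ) (hxy : x < y) (Z : ℝ → ℕ → ℝ) (T : ℝ → ℕ)
    (h0 : ∀ ρ ∈ Set.Ioo (0:ℝ) 1, Z ρ 0 = x)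
    (hrec : ∀ ρ ∈ Set.Ioo (0:ℝ) 1, ∀ k,
      Z ρ (k + 1) = Z ρ k + |Real.log (1 - ρ)| + Real.log (1 + ρ * Real.exp (-(Z ρ k))))
    (hT : ∀ ρ ∈ Set.Ioo (0:ℝ) 1, y < Z ρ (T ρ) ∧ ∀ k < T ρ, Z ρ k ≤ y) :
    Filter.Tendsto (fun ρ : ℝ => (T ρ : ℝ) * |Real.log (1 - ρ)|)
      (nhdsWithin 0 (Set.Ioo 0 1))
      (nhds (Real.log (1 + Real.exp y) - Real.log (1 + Real.exp x))) := by
  have hbounds : ∀ᶠ ρ in 𝓝[Set.Ioo 0 1] 0,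
      log (1 + exp y) - log (1 + exp x) < T ρ * |log (1 - ρ)| ∧
        T ρ * |log (1 - ρ)| ≤ log (1 + exp y) - log (1 + exp x) + |log (1 - ρ)| := by
    filter_upwards [self_mem_nhdsWithin] with ρ hρ
    obtain ⟨hy, hbefore⟩ := hT ρ hρ
    obtain ⟨m, hm⟩ : ∃ m, T ρ = m + 1 :=
      Nat.exists_eq_succ_of_ne_zero fun h => by rw [h, h0 ρ hρ] at hy; linarith
    have hlower := sub_lt_mul_of_lt (hrec ρ hρ) hρ hy
    have hupper := mul_le_sub_of_le (hrec ρ hρ) hρ (hbefore m (by omega))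
    rw [h0 ρ hρ] at hlower hupper
    refine ⟨hlower, ?_⟩
    rw [hm]
    push_cast
    linarith
  have hD := tendsto_abs_log_one_sub_zero.mono_left (nhdsWithin_le_nhds (s := Set.Ioo 0 1))
  exact tendsto_of_tendsto_of_tendsto_of_le_of_le' tendsto_const_nhds
    (by simpa using tendsto_const_nhds.add hD)
    (hbounds.mono fun _ h => h.1.le) (hbounds.mono fun _ h => h.2)
end

section
/- For fixed x ∈ ℝ and b ∈ ℝ, the quantity (1−ρ)^{t(x,b)} converges to (1+e^x)/(1+e^b) as ρ → 0, where t(x,b) is the first time the no-observation log-odds recursion started at x exceeds b (assuming x < b). -/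
/-!
Since `exp |log (1 - ρ)| = (1 - ρ)⁻¹`, one step of the recursion reads
`1 + exp Z_{k+1} = (1 + exp Z_k) / (1 - ρ)`, so `(1 - ρ)^k (1 + exp Z_k) = 1 + exp x` for all `k`.
At the hitting time `t` we have `Z_{t-1} ≤ b < Z_t`, which squeezes `(1 - ρ)^t` between
`(1 - ρ) L` and `L = (1 + eˣ) / (1 + eᵇ)`.
-/

open Real Set Filter Topology

section NoObservationRecursion

variable {ρ : ℝ} (hρ : ρ ∈ Ioo 0 1)
include hρ

lemma one_sub_mul_one_add_exp_step (z : ℝ) :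
    (1 - ρ) * (1 + exp (z + |log (1 - ρ)| + log (1 + ρ * exp (-z)))) = 1 + exp z := by
  have hρ1 : 0 < 1 - ρ := by linarith [hρ.2]
  have habs : |log (1 - ρ)| = -log (1 - ρ) :=
    abs_of_nonpos (log_nonpos hρ1.le (by linarith [hρ.1]))
  have hpos : 0 < 1 + ρ * exp (-z) := by have := hρ.1; positivity
  rw [habs, exp_add, exp_add, exp_neg, exp_log hpos, exp_neg, exp_log hρ1]
  field_simp
  ring

variable {x : ℝ} {Z : ℕ → ℝ} (h0 : Z 0 = x)
  (hrec : ∀ k, Z (k + 1) = Z k + |log (1 - ρ)| + log (1 + ρ * exp (-(Z k))))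
include h0 hrec

lemma one_sub_pow_mul_one_add_exp_eq (k : ℕ) :
    (1 - ρ) ^ k * (1 + exp (Z k)) = 1 + exp x := by
  induction k with
  | zero => simp [h0]
  | succ k ih =>
    rw [pow_succ, mul_assoc, hrec k, one_sub_mul_one_add_exp_step hρ, ih]

lemma one_sub_pow_eq_div (k : ℕ) :
    (1 - ρ) ^ k = (1 + exp x) / (1 + exp (Z k)) :=
  eq_div_of_mul_eq (by positivity) (one_sub_pow_mul_one_add_exp_eq hρ h0 hrec k)

lemma one_sub_pow_hittingTime_mem_Icc {b : ℝ} (hxb : x < b) {t : ℕ} (ht : b < Z t)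
    (hbefore : ∀ k < t, Z k ≤ b) :
    (1 - ρ) ^ t ∈ Icc ((1 - ρ) * ((1 + exp x) / (1 + exp b))) ((1 + exp x) / (1 + exp b)) := by
  have hρ1 : 0 < 1 - ρ := by linarith [hρ.2]
  obtain ⟨m, rfl⟩ : ∃ m, t = m + 1 :=
    Nat.exists_eq_succ_of_ne_zero (by rintro rfl; linarith [h0 ▸ ht])
  constructor
  · rw [pow_succ, mul_comm, one_sub_pow_eq_div hρ h0 hrec]
    gcongr
    exact hbefore m m.lt_succ_self
  · rw [one_sub_pow_eq_div hρ h0 hrec]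
    gcongr

end NoObservationRecursion

/-- For the no-observation recursion started at x < b with hitting time t(x,b),
(1−ρ)^{t(x,b)} → (1+e^x)/(1+e^b) as ρ → 0. -/
theorem stmt13 (x b : ℝ) (hxb : x < b) (Z : ℝ → ℕ → ℝ) (T : ℝ → ℕ)
    (h0 : ∀ ρ ∈ Set.Ioo (0:ℝ) 1, Z ρ 0 = x)
    (hrec : ∀ ρ ∈ Set.Ioo (0:ℝ) 1, ∀ k,
      Z ρ (k + 1) = Z ρ k + |Real.log (1 - ρ)| + Real.log (1 + ρ * Real.exp (-(Z ρ k))))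
    (hT : ∀ ρ ∈ Set.Ioo (0:ℝ) 1, b < Z ρ (T ρ) ∧ ∀ k < T ρ, Z ρ k ≤ b) :
    Filter.Tendsto (fun ρ : ℝ => (1 - ρ) ^ (T ρ))
      (nhdsWithin 0 (Set.Ioo 0 1))
      (nhds ((1 + Real.exp x) / (1 + Real.exp b))) := by
  set L := (1 + exp x) / (1 + exp b)
  have hbounds : ∀ᶠ ρ in 𝓝[Ioo 0 1] (0 : ℝ), (1 - ρ) ^ T ρ ∈ Icc ((1 - ρ) * L) L :=
    eventually_mem_nhdsWithin.mono fun ρ hρ =>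
      one_sub_pow_hittingTime_mem_Icc hρ (h0 ρ hρ) (hrec ρ hρ) hxb (hT ρ hρ).1 (hT ρ hρ).2
  have hlower : Tendsto (fun ρ : ℝ => (1 - ρ) * L) (𝓝[Ioo 0 1] 0) (𝓝 L) :=
    tendsto_nhdsWithin_of_tendsto_nhds <| by
      simpa using ((tendsto_const_nhds (x := (1 : ℝ))).sub (tendsto_id (x := 𝓝 0))).mul_const L
  exact tendsto_of_tendsto_of_tendsto_of_le_of_le' hlower tendsto_const_nhds
    (hbounds.mono fun _ h => h.1) (hbounds.mono fun _ h => h.2)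
end

section
/- Let X₁, X₂, ... be i.i.d. with density f₁, let L(x) = f₁(x)/f₀(x) be the likelihood ratio with E₁[f₀(X)/f₁(X)] ≤ 1, and let ρ ∈ (0,1), z₀ ∈ ℝ. Define η_n = log[e^{z₀} + ∑_{k=0}^{n−1} ρ(1−ρ)^k ∏_{i=1}^k f₀(X_i)/f₁(X_i)]. Then E₁[sup_n η_n] ≤ log(e^{z₀} + 1); in particular, by Jensen's inequality, E₁[η(z₀)] ≤ log(e^{z₀}+1) where η(z₀) = lim_n η_n (the limit exists a.s. by monotone convergence of the inner sum). -/
/-!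
By independence, `E[∏_{i<k} Rᵢ] = ∏_{i<k} E[Rᵢ] ≤ 1`, so the nonnegative series
`S = ∑ₖ ρ(1-ρ)ᵏ ∏_{i<k} Rᵢ` has `E[S] ≤ ∑ₖ ρ(1-ρ)ᵏ = 1`; in particular `S` is a.s. finite and
integrable. Since the partial sums increase to `S`, `sup_n η_n = log(e^{z₀} + S)` a.s., and
Jensen's inequality for the concave logarithm gives
`E[log(e^{z₀} + S)] ≤ log(e^{z₀} + E[S]) ≤ log(e^{z₀} + 1)`.
-/

open MeasureTheory ProbabilityTheory Filter Topology

lemma hasSum_mul_one_sub_pow {ρ : ℝ} (h0 : 0 < ρ) (h2 : ρ < 2) :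
    HasSum (fun k : ℕ => ρ * (1 - ρ) ^ k) 1 := by
  have hr : |1 - ρ| < 1 := by rw [abs_lt]; constructor <;> linarith
  simpa [h0.ne'] using (hasSum_geometric_of_abs_lt_one hr).mul_left ρ

lemma tsum_eq_toReal_tsum_ofReal {α : Type*} {a : α → ℝ} (ha : ∀ k, 0 ≤ a k) :
    ∑' k, a k = (∑' k, ENNReal.ofReal (a k)).toReal := by
  rw [ENNReal.tsum_toReal_eq fun _ => ENNReal.ofReal_ne_top]
  simp only [ENNReal.toReal_ofReal (ha _)]

lemma iSup_log_add_sum_range {b : ℝ} (hb : 0 < b) {a : ℕ → ℝ} (ha : ∀ k, 0 ≤ a k)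
    (hsum : Summable a) :
    ⨆ n, Real.log (b + ∑ k ∈ Finset.range n, a k) = Real.log (b + ∑' k, a k) := by
  have hpos : ∀ n, 0 < b + ∑ k ∈ Finset.range n, a k := fun n =>
    add_pos_of_pos_of_nonneg hb (Finset.sum_nonneg fun k _ => ha k)
  have hmono : Monotone fun n => Real.log (b + ∑ k ∈ Finset.range n, a k) :=
    monotone_nat_of_le_succ fun n => Real.log_le_log (hpos n) (by
      rw [Finset.sum_range_succ]; linarith [ha n])
  have hlim : Tendsto (fun n => Real.log (b + ∑ k ∈ Finset.range n, a k)) atTop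
      (𝓝 (Real.log (b + ∑' k, a k))) :=
    ((Real.continuousAt_log (add_pos_of_pos_of_nonneg hb (tsum_nonneg ha)).ne').tendsto).comp
      (tendsto_const_nhds.add hsum.hasSum.tendsto_sum_nat)
  exact (isLUB_of_tendsto_atTop hmono hlim).ciSup_eq

section

variable {Ω : Type*} [MeasurableSpace Ω] {μ : Measure Ω}

lemma integral_log_add_le_log_add_integral [IsProbabilityMeasure μ] {b : ℝ} (hb : 0 < b)
    {S : Ω → ℝ} (hS : Integrable S μ) (hS0 : 0 ≤ᵐ[μ] S) :
    ∫ ω, Real.log (b + S ω) ∂μ ≤ Real.log (b + ∫ ω, S ω ∂μ) := by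
  have hmem : ∀ᵐ ω ∂μ, b + S ω ∈ Set.Ici b := by
    filter_upwards [hS0] with ω hω using le_add_of_nonneg_right hω
  have hlog_int : Integrable (fun ω => Real.log (b + S ω)) μ := by
    have hmeas : AEStronglyMeasurable (fun ω => Real.log (b + S ω)) μ :=
      (Real.measurable_log.comp_aemeasurable (hS.1.aemeasurable.const_add b)).aestronglyMeasurable
    refine Integrable.mono' ((integrable_const (|Real.log b| + b)).add hS) hmeas ?_
    filter_upwards [hmem] with ω hω
    have hpos : 0 < b + S ω := hb.trans_le hω
    rw [Pi.add_apply, Real.norm_eq_abs, abs_le]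
    constructor
    · linarith [Real.log_le_log hb hω, neg_abs_le (Real.log b)]
    · linarith [Real.log_le_sub_one_of_pos hpos, abs_nonneg (Real.log b)]
  have hconc : ConcaveOn ℝ (Set.Ici b) Real.log :=
    strictConcaveOn_log_Ioi.concaveOn.subset (Set.Ici_subset_Ioi.2 hb) (convex_Ici b)
  have hcont : ContinuousOn Real.log (Set.Ici b) :=
    Real.continuousOn_log.mono fun x hx => (hb.trans_le hx).ne'
  have := hconc.le_map_integral hcont isClosed_Ici hmem ((integrable_const b).add hS) hlog_int
  rwa [integral_add (integrable_const b) hS, integral_const, probReal_univ, one_smul] at this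

section NonnegSeries

variable {a : ℕ → Ω → ℝ} (ha : ∀ k ω, 0 ≤ a k ω) (hmeas : ∀ k, AEMeasurable (a k) μ)
  (hfin : ∑' k, ∫⁻ ω, ENNReal.ofReal (a k ω) ∂μ ≠ ⊤)
include ha hmeas hfin

lemma ae_summable_of_tsum_lintegral_ne_top : ∀ᵐ ω ∂μ, Summable fun k => a k ω := by
  rw [← lintegral_tsum fun k => (hmeas k).ennreal_ofReal] at hfin
  filter_upwards [ae_lt_top' (AEMeasurable.tsum fun k => (hmeas k).ennreal_ofReal) hfin]
    with ω hω
  simpa only [ENNReal.toReal_ofReal (ha _ ω)] using ENNReal.summable_toReal hω.ne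

lemma integrable_tsum_of_tsum_lintegral_ne_top : Integrable (fun ω => ∑' k, a k ω) μ := by
  rw [← lintegral_tsum fun k => (hmeas k).ennreal_ofReal] at hfin
  rw [funext fun ω => tsum_eq_toReal_tsum_ofReal (ha · ω)]
  exact integrable_toReal_of_lintegral_ne_top (AEMeasurable.tsum fun k => (hmeas k).ennreal_ofReal)
    hfin

lemma integral_tsum_eq_toReal_tsum_lintegral :
    ∫ ω, ∑' k, a k ω ∂μ = (∑' k, ∫⁻ ω, ENNReal.ofReal (a k ω) ∂μ).toReal := by
  have hF : AEMeasurable (fun ω => ∑' k, ENNReal.ofReal (a k ω)) μ :=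
    AEMeasurable.tsum fun k => (hmeas k).ennreal_ofReal
  rw [← lintegral_tsum fun k => (hmeas k).ennreal_ofReal] at hfin ⊢
  rw [funext fun ω => tsum_eq_toReal_tsum_ofReal (ha · ω)]
  exact integral_toReal hF (ae_lt_top' hF hfin)

end NonnegSeries

lemma ProbabilityTheory.iIndepFun.lintegral_ofReal_prod {ι : Type*} {R : ι → Ω → ℝ}
    (hR : iIndepFun R μ) (hmeas : ∀ i, Measurable (R i)) (hpos : ∀ i ω, 0 ≤ R i ω)
    (hint : ∀ i, Integrable (R i) μ) (s : Finset ι) :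
    ∫⁻ ω, ENNReal.ofReal (∏ i ∈ s, R i ω) ∂μ = ∏ i ∈ s, ENNReal.ofReal (∫ ω, R i ω ∂μ) := by
  simp only [ENNReal.ofReal_prod_of_nonneg fun i _ => hpos i _]
  change ∫⁻ ω, ∏ i ∈ s, (ENNReal.ofReal ∘ R i) ω ∂μ = _
  rw [lintegral_prod_eq_prod_lintegral_of_indepFun s _
    (hR.comp (fun _ => ENNReal.ofReal) fun _ => ENNReal.measurable_ofReal)
    fun i => (hmeas i).ennreal_ofReal]
  exact Finset.prod_congr rfl fun i _ =>
    (ofReal_integral_eq_lintegral_ofReal (hint i) (Eventually.of_forall (hpos i))).symm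

lemma tsum_lintegral_ofReal_mul_prod_le_one {ρ : ℝ} (h0 : 0 < ρ) (h1 : ρ ≤ 1) {R : ℕ → Ω → ℝ}
    (hR : iIndepFun R μ) (hmeas : ∀ i, Measurable (R i)) (hpos : ∀ i ω, 0 ≤ R i ω)
    (hint : ∀ i, Integrable (R i) μ) (hmean : ∀ i, ∫ ω, R i ω ∂μ ≤ 1) :
    ∑' k, ∫⁻ ω, ENNReal.ofReal (ρ * (1 - ρ) ^ k * ∏ i ∈ Finset.range k, R i ω) ∂μ ≤ 1 := by
  have hw : ∀ k : ℕ, 0 ≤ ρ * (1 - ρ) ^ k := fun k => by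
    have : 0 ≤ 1 - ρ := by linarith
    positivity
  calc ∑' k, ∫⁻ ω, ENNReal.ofReal (ρ * (1 - ρ) ^ k * ∏ i ∈ Finset.range k, R i ω) ∂μ
      = ∑' k, ENNReal.ofReal (ρ * (1 - ρ) ^ k) *
          ∏ i ∈ Finset.range k, ENNReal.ofReal (∫ ω, R i ω ∂μ) := by
        congr 1 with k
        simp only [ENNReal.ofReal_mul (hw k)]
        rw [lintegral_const_mul _ (Finset.measurable_prod _ fun i _ => hmeas i).ennreal_ofReal,
          hR.lintegral_ofReal_prod hmeas hpos hint]
    _ ≤ ∑' k, ENNReal.ofReal (ρ * (1 - ρ) ^ k) :=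
        ENNReal.tsum_le_tsum fun k => mul_le_of_le_one_right' <|
          Finset.prod_le_one' fun i _ => ENNReal.ofReal_le_one.2 (hmean i)
    _ = 1 := by
        rw [← ENNReal.ofReal_tsum_of_nonneg hw (hasSum_mul_one_sub_pow h0 (by linarith)).summable,
          (hasSum_mul_one_sub_pow h0 (by linarith)).tsum_eq, ENNReal.ofReal_one]

end

theorem stmt14_general {Ω : Type*} [MeasurableSpace Ω] (μ : Measure Ω) [IsProbabilityMeasure μ]
    (ρ z₀ : ℝ) (hρ : ρ ∈ Set.Ioo (0:ℝ) 1)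
    (R : ℕ → Ω → ℝ) (hmeas : ∀ i, Measurable (R i)) (hpos : ∀ i ω, 0 ≤ R i ω)
    (hiid : iIndepFun R μ)
    (hint : ∀ i, Integrable (R i) μ)
    (hmean : ∀ i, (∫ ω, R i ω ∂μ) ≤ 1)
    (η : ℕ → Ω → ℝ)
    (hη : ∀ n ω, η n ω = Real.log (Real.exp z₀
      + ∑ k ∈ Finset.range n, ρ * (1 - ρ) ^ k * ∏ i ∈ Finset.range k, R i ω)) :
    (∫ ω, (⨆ n, η n ω) ∂μ) ≤ Real.log (Real.exp z₀ + 1) ∧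
    (∫ ω, Real.log (Real.exp z₀
        + ∑' k : ℕ, ρ * (1 - ρ) ^ k * ∏ i ∈ Finset.range k, R i ω) ∂μ)
      ≤ Real.log (Real.exp z₀ + 1) := by
  obtain ⟨hρ0, hρ1⟩ := hρ
  set a : ℕ → Ω → ℝ := fun k ω => ρ * (1 - ρ) ^ k * ∏ i ∈ Finset.range k, R i ω
  have ha : ∀ k ω, 0 ≤ a k ω := fun k ω => by
    have : 0 ≤ 1 - ρ := by linarith
    have := Finset.prod_nonneg fun i (_ : i ∈ Finset.range k) => hpos i ω
    positivity
  have ha_meas : ∀ k, AEMeasurable (a k) μ := fun k =>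
    (measurable_const.mul (Finset.measurable_prod _ fun i _ => hmeas i)).aemeasurable
  have hlint := tsum_lintegral_ofReal_mul_prod_le_one hρ0 hρ1.le hiid hmeas hpos hint hmean
  have hfin := ne_top_of_le_ne_top ENNReal.one_ne_top hlint
  have hS_int := integrable_tsum_of_tsum_lintegral_ne_top ha ha_meas hfin
  have hS_le : ∫ ω, ∑' k, a k ω ∂μ ≤ 1 := by
    rw [integral_tsum_eq_toReal_tsum_lintegral ha ha_meas hfin]
    exact ENNReal.toReal_le_of_le_ofReal zero_le_one (by rwa [ENNReal.ofReal_one])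
  have hmain : ∫ ω, Real.log (Real.exp z₀ + ∑' k, a k ω) ∂μ ≤ Real.log (Real.exp z₀ + 1) :=
    (integral_log_add_le_log_add_integral (Real.exp_pos z₀) hS_int
      (Eventually.of_forall fun ω => tsum_nonneg (ha · ω))).trans
      (Real.log_le_log (add_pos_of_pos_of_nonneg (Real.exp_pos z₀)
        (integral_nonneg fun ω => tsum_nonneg (ha · ω))) (by linarith))
  refine ⟨?_, hmain⟩
  calc ∫ ω, ⨆ n, η n ω ∂μ = ∫ ω, Real.log (Real.exp z₀ + ∑' k, a k ω) ∂μ := by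
        refine integral_congr_ae ?_
        filter_upwards [ae_summable_of_tsum_lintegral_ne_top ha ha_meas hfin] with ω hω
        simp only [hη]
        exact iSup_log_add_sum_range (Real.exp_pos z₀) (ha · ω) hω
    _ ≤ Real.log (Real.exp z₀ + 1) := hmain

/-- E₁[sup_n η_n] ≤ log(e^{z₀}+1), where
η_n = log(e^{z₀} + ∑_{k=0}^{n−1} ρ(1−ρ)^k ∏_{i=1}^k f₀(X_i)/f₁(X_i)),
the likelihood ratios R_i = f₀(X_i)/f₁(X_i) being i.i.d. nonnegative with E₁[R] ≤ 1;
in particular E₁[η(z₀)] ≤ log(e^{z₀}+1) for the limit η(z₀). -/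
theorem stmt14 {Ω : Type*} [MeasurableSpace Ω] (μ : Measure Ω) [IsProbabilityMeasure μ]
    (ρ z₀ : ℝ) (hρ : ρ ∈ Set.Ioo (0:ℝ) 1)
    (R : ℕ → Ω → ℝ) (hmeas : ∀ i, Measurable (R i)) (hpos : ∀ i ω, 0 ≤ R i ω)
    (hiid : iIndepFun R μ)
    (hident : ∀ i, Measure.map (R i) μ = Measure.map (R 0) μ)
    (hint : ∀ i, Integrable (R i) μ)
    (hmean : ∀ i, (∫ ω, R i ω ∂μ) ≤ 1)
    (η : ℕ → Ω → ℝ)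
    (hη : ∀ n ω, η n ω = Real.log (Real.exp z₀
      + ∑ k ∈ Finset.range n, ρ * (1 - ρ) ^ k * ∏ i ∈ Finset.range k, R i ω)) :
    (∫ ω, (⨆ n, η n ω) ∂μ) ≤ Real.log (Real.exp z₀ + 1) ∧
    (∫ ω, Real.log (Real.exp z₀
        + ∑' k : ℕ, ρ * (1 - ρ) ^ k * ∏ i ∈ Finset.range k, R i ω) ∂μ)
      ≤ Real.log (Real.exp z₀ + 1) :=
  stmt14_general μ ρ z₀ hρ R hmeas hpos hiid hint hmean η hη
end
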